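/- Any module over a double groupoid is also a module over the core groupoid of the double groupoid: given a left action of a double groupoid (F; V, H; P) along ε: E → P, the formula E·X := l(E)^{-1}·(t(E)·X) (for E in the core, X ∈ E with ε(X) = tr(E)) defines a left action of the core groupoid E(F) on E. -/

import Mathlib

/-- A (discrete) double groupoid: a set of boxes `B` with two compatible groupoid
structures, with horizontal edge groupoid `H` and vertical edge groupoid `V`,
both over a common base `P`. -/
structure DGpd (B : Type*) (V : Type*) (H : Type*) (P : Type*) where
  sV : V → P
  eV : V → P
  idV : P → V
  mulV : V → V → V
  invV : V → V
  sH : H → P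
  eH : H → P
  idH : P → H
  mulH : H → H → H
  invH : H → H
  t : B → H
  b : B → H
  l : B → V
  r : B → V
  corner_tl : ∀ A, sH (t A) = sV (l A)
  corner_tr : ∀ A, eH (t A) = sV (r A)
  corner_bl : ∀ A, sH (b A) = eV (l A)
  corner_br : ∀ A, eH (b A) = eV (r A)
  idh : V → B
  idv : H → B
  hc : B → B → B
  vc : B → B → B
  hi : B → B
  vi : B → B
  -- groupoid axioms for V
  sV_id : ∀ p, sV (idV p) = p
  eV_id : ∀ p, eV (idV p) = p
  sV_mul : ∀ g h, eV g = sV h → sV (mulV g h) = sV g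
  eV_mul : ∀ g h, eV g = sV h → eV (mulV g h) = eV h
  mulV_assoc : ∀ g h k, eV g = sV h → eV h = sV k →
    mulV (mulV g h) k = mulV g (mulV h k)
  idV_mul : ∀ g, mulV (idV (sV g)) g = g
  mulV_id : ∀ g, mulV g (idV (eV g)) = g
  sV_inv : ∀ g, sV (invV g) = eV g
  eV_inv : ∀ g, eV (invV g) = sV g
  mulV_inv : ∀ g, mulV g (invV g) = idV (sV g)
  invV_mul : ∀ g, mulV (invV g) g = idV (eV g)
  -- groupoid axioms for H
  sH_id : ∀ p, sH (idH p) = p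
  eH_id : ∀ p, eH (idH p) = p
  sH_mul : ∀ x y, eH x = sH y → sH (mulH x y) = sH x
  eH_mul : ∀ x y, eH x = sH y → eH (mulH x y) = eH y
  mulH_assoc : ∀ x y z, eH x = sH y → eH y = sH z →
    mulH (mulH x y) z = mulH x (mulH y z)
  idH_mul : ∀ x, mulH (idH (sH x)) x = x
  mulH_id : ∀ x, mulH x (idH (eH x)) = x
  sH_inv : ∀ x, sH (invH x) = eH x
  eH_inv : ∀ x, eH (invH x) = sH x
  mulH_inv : ∀ x, mulH x (invH x) = idH (sH x)
  invH_mul : ∀ x, mulH (invH x) x = idH (eH x)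
  -- sides of identity boxes
  idh_t : ∀ g, t (idh g) = idH (sV g)
  idh_b : ∀ g, b (idh g) = idH (eV g)
  idh_l : ∀ g, l (idh g) = g
  idh_r : ∀ g, r (idh g) = g
  idv_t : ∀ x, t (idv x) = x
  idv_b : ∀ x, b (idv x) = x
  idv_l : ∀ x, l (idv x) = idV (sH x)
  idv_r : ∀ x, r (idv x) = idV (eH x)
  -- horizontal groupoid structure on boxes (base V)
  hc_t : ∀ A B, r A = l B → t (hc A B) = mulH (t A) (t B)
  hc_b : ∀ A B, r A = l B → b (hc A B) = mulH (b A) (b B)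
  hc_l : ∀ A B, r A = l B → l (hc A B) = l A
  hc_r : ∀ A B, r A = l B → r (hc A B) = r B
  hc_assoc : ∀ A B C, r A = l B → r B = l C → hc (hc A B) C = hc A (hc B C)
  idh_hc : ∀ A, hc (idh (l A)) A = A
  hc_idh : ∀ A, hc A (idh (r A)) = A
  hi_l : ∀ A, l (hi A) = r A
  hi_r : ∀ A, r (hi A) = l A
  hi_t : ∀ A, t (hi A) = invH (t A)
  hi_b : ∀ A, b (hi A) = invH (b A)
  hc_hi : ∀ A, hc A (hi A) = idh (l A)
  hi_hc : ∀ A, hc (hi A) A = idh (r A)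
  -- vertical groupoid structure on boxes (base H)
  vc_t : ∀ A B, b A = t B → t (vc A B) = t A
  vc_b : ∀ A B, b A = t B → b (vc A B) = b B
  vc_l : ∀ A B, b A = t B → l (vc A B) = mulV (l A) (l B)
  vc_r : ∀ A B, b A = t B → r (vc A B) = mulV (r A) (r B)
  vc_assoc : ∀ A B C, b A = t B → b B = t C → vc (vc A B) C = vc A (vc B C)
  idv_vc : ∀ A, vc (idv (t A)) A = A
  vc_idv : ∀ A, vc A (idv (b A)) = A
  vi_t : ∀ A, t (vi A) = b A
  vi_b : ∀ A, b (vi A) = t A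
  vi_l : ∀ A, l (vi A) = invV (l A)
  vi_r : ∀ A, r (vi A) = invV (r A)
  vc_vi : ∀ A, vc A (vi A) = idv (t A)
  vi_vc : ∀ A, vc (vi A) A = idv (b A)
  -- the identity boxes are functorial
  idh_mulV : ∀ g h, eV g = sV h → vc (idh g) (idh h) = idh (mulV g h)
  idv_mulH : ∀ x y, eH x = sH y → hc (idv x) (idv y) = idv (mulH x y)
  id_id : ∀ p, idh (idV p) = idv (idH p)
  -- the interchange law
  interchange : ∀ K L M N, r K = l L → r M = l N → b K = t M → b L = t N →
    vc (hc K L) (hc M N) = hc (vc K M) (vc L N)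

namespace DGpd

variable {B V H P : Type*} (D : DGpd B V H P)

/-- The totally degenerate box at a point. -/
def Theta (p : P) : B := D.idh (D.idV p)

/-- A box all of whose four sides are identities at `p`; i.e. an element of the
fiber `K(B)_p` of the abelian group bundle `K(B)`. -/
def InFiber (p : P) (A : B) : Prop :=
  D.t A = D.idH p ∧ D.b A = D.idH p ∧ D.l A = D.idV p ∧ D.r A = D.idV p

/-- A box belonging to the core groupoid: its top and right sides are identities. -/
def IsCore (A : B) : Prop :=
  (∃ p, D.t A = D.idH p) ∧ (∃ p, D.r A = D.idV p)

/-- Source of the core groupoid: the bottom-left vertex. -/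
def coreSrc (A : B) : P := D.sH (D.b A)

/-- Target of the core groupoid: the top-right vertex. -/
def coreTgt (A : B) : P := D.eH (D.t A)

/-- Core multiplication `E ∘ F`. -/
def coreMul (E F : B) : B :=
  D.vc (D.hc (D.idh (D.l F)) F) (D.hc E (D.idv (D.b F)))

/-- Core inversion `E ↦ E^{(-1)} = (E ⋅ id_v(b(E)^{-1}))^v`. -/
def coreInv (E : B) : B := D.vi (D.hc E (D.idv (D.invH (D.b E))))

/-- The core action of the core groupoid on boxes:
`E ⊸ A = {(id l(A), A) over (E, id b(A))}`. -/
def coreAct (E A : B) : B :=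
  D.vc (D.hc (D.idh (D.l A)) A) (D.hc E (D.idv (D.b A)))

end DGpd

section Stmt4

variable {B V H P E : Type*}

/-- A left action of a double groupoid `(F; V, H; P)` along `ε : E → P`:
left actions of the groupoids `V` and `H` on `ε`, compatible via
`l(A)⁻¹·(t(A)·X) = b(A)·(r(A)⁻¹·X)`. -/
structure DGpdAction (D : DGpd B V H P) (eps : E → P) where
  aV : V → E → E
  aH : H → E → E
  aV_eps : ∀ g y, eps y = D.eV g → eps (aV g y) = D.sV g
  aV_id : ∀ y, aV (D.idV (eps y)) y = y
  aV_mul : ∀ g h y, D.eV g = D.sV h → eps y = D.eV h →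
    aV (D.mulV g h) y = aV g (aV h y)
  aH_eps : ∀ x y, eps y = D.eH x → eps (aH x y) = D.sH x
  aH_id : ∀ y, aH (D.idH (eps y)) y = y
  aH_mul : ∀ x x' y, D.eH x = D.sH x' → eps y = D.eH x' →
    aH (D.mulH x x') y = aH x (aH x' y)
  compat : ∀ A y, eps y = D.eH (D.t A) →
    aV (D.invV (D.l A)) (aH (D.t A) y) = aH (D.b A) (aV (D.invV (D.r A)) y)

/-- The induced action of the core groupoid: `E · X := l(E)⁻¹·(t(E)·X)`. -/
def coreActMod {D : DGpd B V H P} {eps : E → P} (ac : DGpdAction D eps)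
    (A : B) (y : E) : E :=
  ac.aV (D.invV (D.l A)) (ac.aH (D.t A) y)

/-!
For a core box `A` the top side `t(A)` is an identity, so `A · X = l(A)⁻¹ · X`. The core product
of `A` and `A'` has top side `t(A')` and left side `l(A') l(A)`, so the action law reduces to
`(l(A') l(A))⁻¹ = l(A)⁻¹ l(A')⁻¹` in the groupoid `V`.
-/

namespace DGpd

variable (D : DGpd B V H P)

theorem idV_mulV_of_sV_eq {g : V} {p : P} (h : D.sV g = p) : D.mulV (D.idV p) g = g :=
  h ▸ D.idV_mul g

theorem eq_invV_of_mulV_eq_idV {g k : V} (hgk : D.eV g = D.sV k)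
    (h : D.mulV g k = D.idV (D.sV g)) : D.invV g = k :=
  calc D.invV g = D.mulV (D.invV g) (D.idV (D.sV g)) := by rw [← D.eV_inv, D.mulV_id]
    _ = D.mulV (D.invV g) (D.mulV g k) := by rw [h]
    _ = D.mulV (D.mulV (D.invV g) g) k := (D.mulV_assoc _ _ _ (D.eV_inv g) hgk).symm
    _ = k := by rw [D.invV_mul, D.idV_mulV_of_sV_eq hgk.symm]

theorem invV_idV (p : P) : D.invV (D.idV p) = D.idV p :=
  D.eq_invV_of_mulV_eq_idV (by rw [D.eV_id, D.sV_id])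
    (by rw [D.sV_id, D.idV_mulV_of_sV_eq (D.sV_id p)])

theorem invV_mulV {g h : V} (hgh : D.eV g = D.sV h) :
    D.invV (D.mulV g h) = D.mulV (D.invV h) (D.invV g) := by
  have hinv : D.eV (D.invV h) = D.sV (D.invV g) := by rw [D.eV_inv, D.sV_inv, hgh]
  have hs : D.sV (D.mulV (D.invV h) (D.invV g)) = D.eV h := by rw [D.sV_mul _ _ hinv, D.sV_inv]
  refine D.eq_invV_of_mulV_eq_idV (by rw [D.eV_mul _ _ hgh, hs]) ?_
  calc D.mulV (D.mulV g h) (D.mulV (D.invV h) (D.invV g))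
      = D.mulV g (D.mulV (D.mulV h (D.invV h)) (D.invV g)) := by
        rw [D.mulV_assoc _ _ _ hgh hs.symm, D.mulV_assoc _ _ _ (D.sV_inv h).symm hinv]
    _ = D.mulV g (D.invV g) := by
        rw [D.mulV_inv, D.idV_mulV_of_sV_eq (by rw [D.sV_inv, hgh])]
    _ = D.idV (D.sV (D.mulV g h)) := by rw [D.mulV_inv, D.sV_mul _ _ hgh]

variable {D}

theorem IsCore.t_eq {A : B} (hA : D.IsCore A) : D.t A = D.idH (D.coreTgt A) := by
  obtain ⟨⟨p, hp⟩, -⟩ := hA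
  rw [coreTgt, hp, D.eH_id]

theorem IsCore.r_eq {A : B} (hA : D.IsCore A) : D.r A = D.idV (D.coreTgt A) := by
  obtain ⟨-, ⟨q, hq⟩⟩ := hA
  rw [coreTgt, D.corner_tr, hq, D.sV_id]

theorem coreMul_composable {A A' : B} (ht : D.t A = D.idH (D.coreSrc A'))
    (hr : D.r A = D.idV (D.coreSrc A')) :
    D.b (D.hc (D.idh (D.l A')) A') = D.t (D.hc A (D.idv (D.b A'))) := by
  rw [D.hc_b _ _ (D.idh_r _), D.idh_b, ← D.corner_bl, D.idH_mul,
    D.hc_t _ _ (hr.trans (D.idv_l _).symm), D.idv_t, ht, coreSrc, D.idH_mul]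

theorem t_coreMul {A A' : B} (ht : D.t A = D.idH (D.coreSrc A'))
    (hr : D.r A = D.idV (D.coreSrc A')) : D.t (D.coreMul A A') = D.t A' := by
  rw [coreMul, D.vc_t _ _ (coreMul_composable ht hr), D.hc_t _ _ (D.idh_r _), D.idh_t,
    ← D.corner_tl, D.idH_mul]

theorem l_coreMul {A A' : B} (ht : D.t A = D.idH (D.coreSrc A'))
    (hr : D.r A = D.idV (D.coreSrc A')) :
    D.l (D.coreMul A A') = D.mulV (D.l A') (D.l A) := by
  rw [coreMul, D.vc_l _ _ (coreMul_composable ht hr), D.hc_l _ _ (D.idh_r _), D.idh_l,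
    D.hc_l _ _ (hr.trans (D.idv_l _).symm)]

end DGpd

namespace DGpdAction

variable {D : DGpd B V H P} {eps : E → P} (ac : DGpdAction D eps)

theorem aH_idH {p : P} {y : E} (hy : eps y = p) : ac.aH (D.idH p) y = y :=
  hy ▸ ac.aH_id y

theorem aV_idV {p : P} {y : E} (hy : eps y = p) : ac.aV (D.idV p) y = y :=
  hy ▸ ac.aV_id y

theorem aV_invV_mulV {g h : V} {y : E} (hgh : D.eV g = D.sV h) (hy : eps y = D.sV g) :
    ac.aV (D.invV (D.mulV g h)) y = ac.aV (D.invV h) (ac.aV (D.invV g) y) := by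
  rw [D.invV_mulV hgh,
    ac.aV_mul _ _ _ (by rw [D.eV_inv, D.sV_inv, hgh]) (by rw [D.eV_inv, hy])]

theorem eps_coreActMod (A : B) {y : E} (hy : eps y = D.coreTgt A) :
    eps (coreActMod ac A y) = D.coreSrc A := by
  have hty : eps (ac.aH (D.t A) y) = D.sH (D.t A) := ac.aH_eps _ _ hy
  rw [coreActMod, ac.aV_eps _ _ (by rw [hty, D.eV_inv, D.corner_tl]), D.sV_inv, ← D.corner_bl,
    DGpd.coreSrc]

theorem coreActMod_Theta {p : P} {y : E} (hy : eps y = p) : coreActMod ac (D.Theta p) y = y := by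
  rw [coreActMod, DGpd.Theta, D.idh_t, D.idh_l, D.sV_id, D.invV_idV, ac.aH_idH hy,
    ac.aV_idV hy]

theorem coreActMod_coreMul {A A' : B} {y : E} (ht : D.t A = D.idH (D.coreSrc A'))
    (hr : D.r A = D.idV (D.coreSrc A')) (hy : eps y = D.coreTgt A') :
    coreActMod ac (D.coreMul A A') y = coreActMod ac A (coreActMod ac A' y) := by
  have hl : D.eV (D.l A') = D.sV (D.l A) := by
    rw [← D.corner_bl, ← D.corner_tl, ht, D.sH_id, DGpd.coreSrc]
  have hty : eps (ac.aH (D.t A') y) = D.sV (D.l A') := by rw [ac.aH_eps _ _ hy, D.corner_tl]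
  calc coreActMod ac (D.coreMul A A') y
      = ac.aV (D.invV (D.mulV (D.l A') (D.l A))) (ac.aH (D.t A') y) := by
        rw [coreActMod, DGpd.t_coreMul ht hr, DGpd.l_coreMul ht hr]
    _ = ac.aV (D.invV (D.l A)) (coreActMod ac A' y) := ac.aV_invV_mulV hl hty
    _ = coreActMod ac A (coreActMod ac A' y) :=
        congrArg (ac.aV _) (by rw [ht, ac.aH_idH (ac.eps_coreActMod A' hy)])

end DGpdAction

/-- Any module over a double groupoid is also a module over the core
groupoid: the formula `E·X := l(E)⁻¹·(t(E)·X)` defines a left action of the core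
groupoid `E(F)` along `ε`. -/
theorem core_groupoid_acts_on_module (D : DGpd B V H P) (eps : E → P)
    (ac : DGpdAction D eps) :
    (∀ A y, D.IsCore A → eps y = D.coreTgt A →
      eps (coreActMod ac A y) = D.coreSrc A) ∧
    (∀ (p : P) y, eps y = p → coreActMod ac (D.Theta p) y = y) ∧
    (∀ A A' y, D.IsCore A → D.IsCore A' → D.coreTgt A = D.coreSrc A' →
      eps y = D.coreTgt A' →
      coreActMod ac (D.coreMul A A') y = coreActMod ac A (coreActMod ac A' y)) := by
  refine ⟨fun A _ _ hy => ac.eps_coreActMod A hy, fun _ _ hy => ac.coreActMod_Theta hy,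
    fun _ _ _ hA _ hAA' hy => ac.coreActMod_coreMul ?_ ?_ hy⟩
  · rw [hA.t_eq, hAA']
  · rw [hA.r_eq, hAA']

end Stmt4
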